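/- Let S be a commutative ring, I ⊆ S an ideal, and m ∈ S. The multiplication-by-m map μ : S/(I : m) → S/I, x + (I : m) ↦ mx + I, is a well-defined injective S-module homomorphism. Let K be a free resolution of S/(I : m), let F be a free resolution of S/I, and let f : K → F be a chain map whose induced map on 0-th homology is μ. Then the mapping cone C(f), with C(f)_n = F_n ⊕ K_{n−1} and differential d(x, y) = (f(y) + d_F(x), −d_K(y)), is a free resolution of S/(I + (m)). -/

import Mathlib

open CategoryTheory CategoryTheory.Limits

universe u

variable {S : Type u} [CommRing S]

/-- The linear map `(g, f) ↦ - d_F f` on a product, used as the second component of the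
differential of a mapping cone. -/
def negDsnd (F : ChainComplex (ModuleCat.{u} S) ℕ) (n : ℕ) (A : Type u)
    [AddCommGroup A] [Module S A] : (A × F.X (n + 1)) →ₗ[S] F.X n where
  toFun x := -(F.d (n + 1) n x.2)
  map_add' x y := by simp [neg_add]; abel
  map_smul' c x := by simp

@[simp] lemma negDsnd_apply (F : ChainComplex (ModuleCat.{u} S) ℕ) (n : ℕ) (A : Type u)
    [AddCommGroup A] [Module S A] (x : A × F.X (n + 1)) :
    negDsnd F n A x = -(F.d (n + 1) n x.2) := rfl

/-- The underlying modules of the mapping cone of a chain map `h : F ⟶ G` of ℕ-indexed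
chain complexes: `C(h)ₙ = Gₙ ⊕ F_{n-1}`, where `F_{-1} = 0`. -/
def coneX (F G : ChainComplex (ModuleCat.{u} S) ℕ) : ℕ → ModuleCat.{u} S
  | 0 => G.X 0
  | (n + 1) => ModuleCat.of S (G.X (n + 1) × F.X n)

/-- The differential of the mapping cone of `h : F ⟶ G`: `d (g, f) = (h f + d_G g, - d_F f)`. -/
def coneD (F G : ChainComplex (ModuleCat.{u} S) ℕ) (h : F ⟶ G) :
    ∀ n : ℕ, coneX F G (n + 1) ⟶ coneX F G n
  | 0 => ModuleCat.ofHom (LinearMap.coprod (G.d 1 0).hom (h.f 0).hom)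
  | (n + 1) => ModuleCat.ofHom
      (LinearMap.prod
        (LinearMap.coprod (G.d (n + 2) (n + 1)).hom (h.f (n + 1)).hom)
        (negDsnd F n (G.X (n + 2))))

theorem coneD_comp (F G : ChainComplex (ModuleCat.{u} S) ℕ) (h : F ⟶ G) :
    ∀ n : ℕ, coneD F G h (n + 1) ≫ coneD F G h n = 0 := by
  have dG0 : ∀ (i j k : ℕ) (y : G.X i), (G.d j k).hom ((G.d i j).hom y) = 0 := by
    intro i j k y
    rw [← LinearMap.comp_apply, ← ModuleCat.hom_comp, G.d_comp_d i j k]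
    rfl
  have dF0 : ∀ (i j k : ℕ) (y : F.X i), (F.d j k).hom ((F.d i j).hom y) = 0 := by
    intro i j k y
    rw [← LinearMap.comp_apply, ← ModuleCat.hom_comp, F.d_comp_d i j k]
    rfl
  have hc : ∀ (i j : ℕ) (y : F.X i), (G.d i j).hom ((h.f i).hom y) = (h.f j).hom ((F.d i j).hom y) := by
    intro i j y
    rw [← LinearMap.comp_apply, ← ModuleCat.hom_comp, ← LinearMap.comp_apply,
      ← ModuleCat.hom_comp, h.comm i j]
  intro n
  match n with
  | 0 =>
    apply ModuleCat.hom_ext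
    show (LinearMap.coprod (G.d 1 0).hom (h.f 0).hom).comp
        (LinearMap.prod (LinearMap.coprod (G.d 2 1).hom (h.f 1).hom) (negDsnd F 0 (G.X 2))) = 0
    apply LinearMap.ext
    rintro ⟨xg, xf⟩
    simp only [LinearMap.comp_apply, LinearMap.prod_apply, Function.prod, LinearMap.coprod_apply,
      negDsnd_apply, LinearMap.zero_apply, map_add, map_neg, Prod.fst_zero, Prod.snd_zero]
    rw [dG0, hc]
    abel
  | (m + 1) =>
    apply ModuleCat.hom_ext
    show (LinearMap.prod (LinearMap.coprod (G.d (m + 2) (m + 1)).hom (h.f (m + 1)).hom)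
          (negDsnd F m (G.X (m + 2)))).comp
        (LinearMap.prod (LinearMap.coprod (G.d (m + 3) (m + 2)).hom (h.f (m + 2)).hom)
          (negDsnd F (m + 1) (G.X (m + 3)))) = 0
    apply LinearMap.ext
    rintro ⟨xg, xf⟩
    simp only [LinearMap.comp_apply, LinearMap.prod_apply, Function.prod, LinearMap.coprod_apply,
      negDsnd_apply, LinearMap.zero_apply, map_add, map_neg, Prod.fst_zero, Prod.snd_zero]
    refine Prod.ext ?_ ?_
    · simp only [Prod.fst_zero]
      rw [dG0, hc]
      abel
    · simp only [Prod.snd_zero]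
      rw [dF0]
      simp

/-- The mapping cone of a chain map `f : K ⟶ F` of ℕ-indexed chain complexes of
`S`-modules: `C(f)ₙ = Fₙ ⊕ K_{n-1}` with differential `d (x, y) = (f y + d_F x, - d_K y)`. -/
noncomputable def mappingCone (K F : ChainComplex (ModuleCat.{u} S) ℕ) (f : K ⟶ F) :
    ChainComplex (ModuleCat.{u} S) ℕ :=
  ChainComplex.of (coneX K F) (coneD K F f) (coneD_comp K F f)

/-!
The cone of `f` is exact in degree `n + 2` because `K` and `F` are exact in degrees `n + 1` and
`n + 2`, and in degree `1` because `F` is exact there and `H₀(f) ≅ μ` is injective: in both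
cases a cycle of the cone has the form `(x, d z)`, and it is the boundary of `(w, -z)` for any
`w` with `d w = x + f z`. In degree `0` the cone has homology `F₀ / (d F₁ + f K₀)`, which is
the cokernel of `H₀(f)`, hence of `μ`, and `(S/I) / m (S/I) ≅ S/(I + (m))`.
-/

namespace ChainComplex

variable {R : Type*} [Ring R] (C : ChainComplex (ModuleCat R) ℕ)

noncomputable def toHomology₀ : C.X 0 ⟶ C.homology 0 :=
  C.pOpcycles 0 ≫ C.isoHomologyι₀.inv

lemma toHomology₀_surjective : Function.Surjective C.toHomology₀ :=
  (ModuleCat.epi_iff_surjective _).mp (epi_comp _ _)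

lemma toHomology₀_eq_zero_iff (x : C.X 0) :
    C.toHomology₀ x = 0 ↔ x ∈ LinearMap.range (C.d 1 0).hom := by
  have hp := ConcreteCategory.congr_hom (C.pOpcycles_opcyclesIsoSc'_hom 1 0 0 (by simp) (by simp)) x
  rw [ConcreteCategory.comp_apply] at hp
  calc C.toHomology₀ x = 0 ↔ C.pOpcycles 0 x = 0 := by
        rw [toHomology₀, ConcreteCategory.comp_apply]
        exact map_eq_zero_iff _ ((ModuleCat.mono_iff_injective _).mp inferInstance)
    _ ↔ (C.opcyclesIsoSc' 1 0 0 _ _).hom (C.pOpcycles 0 x) = 0 :=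
        (map_eq_zero_iff _ ((ModuleCat.mono_iff_injective _).mp inferInstance)).symm
    _ ↔ (C.sc' 1 0 0).pOpcycles x = 0 := Iff.of_eq (congrArg (· = 0) hp)
    _ ↔ x ∈ LinearMap.range (C.d 1 0).hom := (C.sc' 1 0 0).moduleCat_pOpcycles_eq_zero_iff x

lemma ker_toHomology₀ : LinearMap.ker C.toHomology₀.hom = LinearMap.range (C.d 1 0).hom :=
  Submodule.ext C.toHomology₀_eq_zero_iff

variable {C} in
lemma toHomology₀_naturality {D : ChainComplex (ModuleCat R) ℕ} (φ : C ⟶ D) :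
    φ.f 0 ≫ D.toHomology₀ = C.toHomology₀ ≫ HomologicalComplex.homologyMap φ 0 := by
  simp [toHomology₀, ← HomologicalComplex.p_opcyclesMap_assoc]

variable {C} in
lemma range_homologyMap_zero {D : ChainComplex (ModuleCat R) ℕ} (φ : C ⟶ D) :
    LinearMap.range (HomologicalComplex.homologyMap φ 0).hom =
      (LinearMap.range (φ.f 0).hom).map D.toHomology₀.hom := by
  rw [← LinearMap.range_comp_of_range_eq_top _
      (LinearMap.range_eq_top.mpr C.toHomology₀_surjective), ← LinearMap.range_comp,
    ← ModuleCat.hom_comp, ← ModuleCat.hom_comp, toHomology₀_naturality]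

variable {C} in
lemma ker_mkQ_comp_toHomology₀ {D : ChainComplex (ModuleCat R) ℕ} (φ : C ⟶ D) :
    LinearMap.ker ((LinearMap.range (HomologicalComplex.homologyMap φ 0).hom).mkQ ∘ₗ
      D.toHomology₀.hom) = LinearMap.range (D.d 1 0).hom ⊔ LinearMap.range (φ.f 0).hom := by
  rw [LinearMap.ker_comp, Submodule.ker_mkQ, range_homologyMap_zero, Submodule.comap_map_eq,
    ker_toHomology₀, sup_comm]

lemma exactAt_succ_iff (n : ℕ) :
    C.ExactAt (n + 1) ↔
      ∀ x : C.X (n + 1), C.d (n + 1) n x = 0 → ∃ y, C.d (n + 2) (n + 1) y = x := by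
  rw [C.exactAt_iff' (n + 2) (n + 1) n (by simp) (by simp), ShortComplex.moduleCat_exact_iff]
  rfl

end ChainComplex

namespace Submodule

variable {R M : Type*} [CommRing R] [AddCommGroup M] [Module R M] (N : Submodule R M) (x : M)

lemma colon_span_singleton_eq_ker :
    N.colon (span R {x}) = LinearMap.ker (N.mkQ ∘ₗ LinearMap.toSpanSingleton R M x) := by
  ext r
  simp [← Quotient.mk_smul, Quotient.mk_eq_zero]

noncomputable def smulQuotColon : (R ⧸ N.colon (span R {x})) →ₗ[R] M ⧸ N :=
  (N.colon (span R {x})).liftQ _ (N.colon_span_singleton_eq_ker x).le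

@[simp]
lemma smulQuotColon_mk (r : R) : N.smulQuotColon x (Quotient.mk r) = Quotient.mk (r • x) :=
  rfl

lemma smulQuotColon_injective : Function.Injective (N.smulQuotColon x) :=
  LinearMap.ker_eq_bot.mp (ker_liftQ_eq_bot' _ _ (N.colon_span_singleton_eq_ker x))

lemma range_smulQuotColon : LinearMap.range (N.smulQuotColon x) = (span R {x}).map N.mkQ := by
  rw [smulQuotColon, range_liftQ, LinearMap.range_comp, LinearMap.range_toSpanSingleton]

noncomputable def quotRangeSmulQuotColonEquiv :
    ((M ⧸ N) ⧸ LinearMap.range (N.smulQuotColon x)) ≃ₗ[R] M ⧸ N ⊔ span R {x} :=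
  quotEquivOfEq _ _ (N.range_smulQuotColon x) ≪≫ₗ quotientQuotientEquivQuotientSup N _

end Submodule

lemma ModuleCat.injective_of_iso_comp_eq {R : Type*} [Ring R]
    {A B A' B' : ModuleCat R} {g : A ⟶ B} {g' : A' ⟶ B'} (eA : A ≅ A') (eB : B ≅ B')
    (h : eA.inv ≫ g ≫ eB.hom = g') (hg' : Function.Injective g') : Function.Injective g := by
  have := (ModuleCat.mono_iff_injective g').mpr hg'
  rw [← ModuleCat.mono_iff_injective, show g = eA.hom ≫ g' ≫ eB.inv by simp [← h]]
  infer_instance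

noncomputable def ModuleCat.quotRangeEquivOfIso {R : Type*} [Ring R]
    {A B A' B' : ModuleCat R} {g : A ⟶ B} {g' : A' ⟶ B'} (eA : A ≅ A') (eB : B ≅ B')
    (h : eA.inv ≫ g ≫ eB.hom = g') :
    (B ⧸ LinearMap.range g.hom) ≃ₗ[R] B' ⧸ LinearMap.range g'.hom :=
  Submodule.Quotient.equiv _ _ eB.toLinearEquiv <| by
    rw [← h, ModuleCat.hom_comp, ModuleCat.hom_comp, LinearMap.range_comp_of_range_eq_top,
      LinearMap.range_comp]
    · rfl
    · exact LinearMap.range_eq_top.mpr ((ModuleCat.epi_iff_surjective _).mp inferInstance)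

section MappingCone

variable {K F : ChainComplex (ModuleCat.{u} S) ℕ} (f : K ⟶ F)

lemma mappingCone_d (n : ℕ) : (mappingCone K F f).d (n + 1) n = coneD K F f n :=
  ChainComplex.of_d _ _ n

lemma mappingCone_d_one_zero_apply (x : F.X 1) (y : K.X 0) :
    (mappingCone K F f).d 1 0 (x, y) = F.d 1 0 x + f.f 0 y := by
  simp only [mappingCone_d]
  rfl

lemma mappingCone_d_succ_apply (n : ℕ) (x : F.X (n + 2)) (y : K.X (n + 1)) :
    (mappingCone K F f).d (n + 2) (n + 1) (x, y) =
      (F.d (n + 2) (n + 1) x + f.f (n + 1) y, -K.d (n + 1) n y) := by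
  simp only [mappingCone_d]
  rfl

lemma range_mappingCone_d_one_zero :
    LinearMap.range ((mappingCone K F f).d 1 0).hom =
      LinearMap.range (F.d 1 0).hom ⊔ LinearMap.range (f.f 0).hom := by
  simp only [mappingCone_d]
  exact LinearMap.range_coprod _ _

lemma mappingCone_exists_d_eq {n : ℕ} (hF : F.ExactAt (n + 1)) (x : F.X (n + 1))
    (z : K.X (n + 1)) (hx : F.d (n + 1) n x + f.f n (K.d (n + 1) n z) = 0) :
    ∃ w, (mappingCone K F f).d (n + 2) (n + 1) w = (x, K.d (n + 1) n z) := by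
  have hcycle : F.d (n + 1) n (x + f.f (n + 1) z) = 0 := by
    rw [map_add, ← ConcreteCategory.comp_apply, f.comm, ConcreteCategory.comp_apply, hx]
  obtain ⟨w, hw⟩ := (F.exactAt_succ_iff n).mp hF _ hcycle
  refine ⟨(w, -z), ?_⟩
  rw [mappingCone_d_succ_apply, hw, map_neg, map_neg, neg_neg, add_neg_cancel_right]

lemma mappingCone_exactAt_one (hF : F.ExactAt 1)
    (hf : Function.Injective (HomologicalComplex.homologyMap f 0)) :
    (mappingCone K F f).ExactAt 1 := by
  rw [ChainComplex.exactAt_succ_iff]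
  rintro ⟨x, y⟩ hxy
  rw [mappingCone_d_one_zero_apply] at hxy
  obtain ⟨z, rfl⟩ : y ∈ LinearMap.range (K.d 1 0).hom := by
    rw [← ChainComplex.toHomology₀_eq_zero_iff]
    refine hf ?_
    rw [← ConcreteCategory.comp_apply, ← ChainComplex.toHomology₀_naturality,
      ConcreteCategory.comp_apply, map_zero, ChainComplex.toHomology₀_eq_zero_iff]
    exact ⟨-x, by rw [map_neg, neg_eq_iff_add_eq_zero]; exact hxy⟩
  exact mappingCone_exists_d_eq f hF x z hxy

lemma mappingCone_exactAt_succ_succ (n : ℕ) (hK : K.ExactAt (n + 1)) (hF : F.ExactAt (n + 2)) :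
    (mappingCone K F f).ExactAt (n + 2) := by
  rw [ChainComplex.exactAt_succ_iff]
  rintro ⟨x, y⟩ hxy
  rw [mappingCone_d_succ_apply] at hxy
  obtain ⟨hx, hy⟩ := Prod.mk_eq_zero.mp hxy
  obtain ⟨z, rfl⟩ := (K.exactAt_succ_iff n).mp hK y (neg_eq_zero.mp hy)
  exact mappingCone_exists_d_eq f hF x z hx

noncomputable def mappingConeHomologyZeroEquiv :
    (mappingCone K F f).homology 0 ≃ₗ[S]
      F.homology 0 ⧸ LinearMap.range (HomologicalComplex.homologyMap f 0).hom :=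
  let q : (mappingCone K F f).X 0 →ₗ[S] _ :=
    (LinearMap.range (HomologicalComplex.homologyMap f 0).hom).mkQ ∘ₗ F.toHomology₀.hom
  ((mappingCone K F f).toHomology₀.hom.quotKerEquivOfSurjective
      (mappingCone K F f).toHomology₀_surjective).symm ≪≫ₗ
    Submodule.quotEquivOfEq _ (LinearMap.ker q)
      (((mappingCone K F f).ker_toHomology₀.trans (range_mappingCone_d_one_zero f)).trans
        (ChainComplex.ker_mkQ_comp_toHomology₀ f).symm) ≪≫ₗ
    q.quotKerEquivOfSurjective ((Submodule.mkQ_surjective _).comp F.toHomology₀_surjective)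

lemma mappingCone_free (hK : ∀ n, Module.Free S (K.X n)) (hF : ∀ n, Module.Free S (F.X n)) :
    ∀ n, Module.Free S ((mappingCone K F f).X n)
  | 0 => hF 0
  | n + 1 =>
    have := hF (n + 1)
    have := hK n
    inferInstanceAs (Module.Free S (F.X (n + 1) × K.X n))

end MappingCone

/-- Let `I ⊆ S` be an ideal and `m ∈ S`.  The multiplication-by-`m` map
`μ : S/(I : m) → S/I` is a well-defined injective `S`-module homomorphism, and for every
free resolution `K` of `S/(I : m)`, every free resolution `F` of `S/I`, and every chain
map `f : K ⟶ F` whose induced map on 0-th homology is `μ`, the mapping cone `C(f)` is a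
free resolution of `S/(I + (m))`. -/
theorem mappingCone_free_resolution (I : Ideal S) (m : S) :
    ∃ μ : (S ⧸ I.colon (Ideal.span {m})) →ₗ[S] (S ⧸ I),
      Function.Injective μ ∧
      (∀ x : S, μ (Submodule.Quotient.mk x) = Submodule.Quotient.mk (m * x)) ∧
      ∀ (K F : ChainComplex (ModuleCat.{u} S) ℕ) (f : K ⟶ F),
        (∀ n, Module.Free S (K.X n)) →
        (∀ n, Module.Free S (F.X n)) →
        (∀ n, 1 ≤ n → IsZero (K.homology n)) →
        (∀ n, 1 ≤ n → IsZero (F.homology n)) →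
        ∀ (eK : K.homology 0 ≅ ModuleCat.of S (S ⧸ I.colon (Ideal.span {m})))
          (eF : F.homology 0 ≅ ModuleCat.of S (S ⧸ I)),
          eK.inv ≫ HomologicalComplex.homologyMap f 0 ≫ eF.hom = ModuleCat.ofHom μ →
          (∀ n, Module.Free S ((mappingCone K F f).X n)) ∧
          (∀ n, 1 ≤ n → IsZero ((mappingCone K F f).homology n)) ∧
          Nonempty ((mappingCone K F f).homology 0 ≅
            ModuleCat.of S (S ⧸ (I + Ideal.span {m}))) := by
  refine ⟨I.smulQuotColon m, I.smulQuotColon_injective m,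
    fun x ↦ (I.smulQuotColon_mk m x).trans (by rw [smul_eq_mul, mul_comm]), ?_⟩
  intro K F f hK hF hKex hFex eK eF hf
  have hinj : Function.Injective (HomologicalComplex.homologyMap f 0) :=
    ModuleCat.injective_of_iso_comp_eq eK eF hf (I.smulQuotColon_injective m)
  have exactAt (C : ChainComplex (ModuleCat.{u} S) ℕ)
      (hC : ∀ n, 1 ≤ n → IsZero (C.homology n)) (n : ℕ) : C.ExactAt (n + 1) :=
    (C.exactAt_iff_isZero_homology _).mpr (hC _ n.succ_pos)
  refine ⟨mappingCone_free f hK hF, fun n hn ↦ ?_,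
    ⟨(mappingConeHomologyZeroEquiv f ≪≫ₗ ModuleCat.quotRangeEquivOfIso eK eF hf ≪≫ₗ
      I.quotRangeSmulQuotColonEquiv m).toModuleIso⟩⟩
  rw [← HomologicalComplex.exactAt_iff_isZero_homology]
  obtain ⟨n, rfl⟩ := Nat.exists_eq_add_of_le' hn
  cases n with
  | zero => exact mappingCone_exactAt_one f (exactAt F hFex 0) hinj
  | succ n => exact mappingCone_exactAt_succ_succ f n (exactAt K hKex n) (exactAt F hFex (n + 1))
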